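/- arXiv:1806.09078 — 2 statements merged into one kernel-verified Lean document; each statement's English description precedes it below -/
import Mathlib

section
/- If K₁ and K₂ are positive semidefinite kernels on a set X, then their pointwise product K(x,y) = K₁(x,y)·K₂(x,y) is also a positive semidefinite kernel on X. -/
/-!
A kernel is positive semidefinite exactly when all its Gram matrices `(K (x i) (x j))ᵢⱼ` are
positive semidefinite matrices; symmetry of `K` is the Hermitian condition on the `2 × 2` ones.
The Gram matrix of the product kernel is the Hadamard product of the two Gram matrices, which is
positive semidefinite by the Schur product theorem.
-/

open Finset

/-- A positive semidefinite kernel: symmetric and all finite quadratic forms nonnegative. -/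
def IsPSDKernel {X : Type*} (K : X → X → ℝ) : Prop :=
  (∀ x y, K x y = K y x) ∧
    ∀ (m : ℕ) (x : Fin m → X) (c : Fin m → ℝ),
      0 ≤ ∑ i, ∑ j, c i * c j * K (x i) (x j)

open Matrix

theorem Matrix.dotProduct_mulVec_eq_sum_sum {ι R : Type*} [Fintype ι] [CommSemiring R]
    (M : Matrix ι ι R) (c : ι → R) :
    c ⬝ᵥ (M *ᵥ c) = ∑ i, ∑ j, c i * c j * M i j := by
  simp only [dotProduct, mulVec, Finset.mul_sum]
  exact sum_congr rfl fun i _ => sum_congr rfl fun j _ => by ring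

theorem isPSDKernel_iff_posSemidef {X : Type*} {K : X → X → ℝ} :
    IsPSDKernel K ↔ ∀ (m : ℕ) (x : Fin m → X), (of fun i j => K (x i) (x j)).PosSemidef := by
  simp only [IsPSDKernel, posSemidef_iff_dotProduct_mulVec, star_trivial,
    dotProduct_mulVec_eq_sum_sum, of_apply]
  constructor
  · rintro ⟨hsymm, hnonneg⟩ m x
    exact ⟨IsHermitian.ext fun i j => by simp [hsymm], hnonneg m x⟩
  · intro h
    refine ⟨fun a b => ?_, fun m x => (h m x).2⟩
    simpa using (h 2 ![a, b]).1.apply 1 0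

theorem psd_kernel_product {X : Type*} (K₁ K₂ : X → X → ℝ)
    (h₁ : IsPSDKernel K₁) (h₂ : IsPSDKernel K₂) :
    IsPSDKernel (fun x y => K₁ x y * K₂ x y) := by
  rw [isPSDKernel_iff_posSemidef] at h₁ h₂ ⊢
  exact fun m x => (h₁ m x).hadamard (h₂ m x)
end

section
/- Let Π_A = {x_{is} ∈ ℝ³ : i ∈ [J], s ∈ [M]} and Π_B = {y_{jt} ∈ ℝ³ : j ∈ [J], t ∈ [N]} be two sequences of J body joints over M and N frames. Then the sequence kernel K(Π_A, Π_B) = (1/(MN)) ∑_{i=1}^{J} ∑_{s=1}^{M} ∑_{t=1}^{N} K_{σ₁}(x_{is}, y_{it})² · G_{σ₂}(s/M, t/N) is a positive semidefinite kernel on the space of such sequences (of arbitrary lengths). -/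
set_option maxHeartbeats 1000000

open Finset

/-- A sequence of `J` body joints in `ℝ³` over a positive number of frames. -/
structure JointSeq (J : ℕ) where
  len : ℕ
  len_pos : 0 < len
  joints : Fin J → Fin len → (Fin 3 → ℝ)

/-- The joint subkernel `K_{σ₁}`. -/
noncomputable def Kjoint (σ₁ : ℝ) (x y : Fin 3 → ℝ) : ℝ :=
  ∑ i : Fin 3, Real.exp (-(x i - y i) ^ 2 / (2 * σ₁ ^ 2))

/-- The temporal subkernel `G_{σ₂}`. -/
noncomputable def Gtemp (σ₂ : ℝ) (a b : ℝ) : ℝ :=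
  Real.exp (-(a - b) ^ 2 / (2 * σ₂ ^ 2))

/-- The sequence kernel (SCK). -/
noncomputable def seqKernel (J : ℕ) (σ₁ σ₂ : ℝ) (A B : JointSeq J) : ℝ :=
  (1 / ((A.len : ℝ) * (B.len : ℝ))) *
    ∑ i : Fin J, ∑ s : Fin A.len, ∑ t : Fin B.len,
      (Kjoint σ₁ (A.joints i s) (B.joints i t)) ^ 2 *
        Gtemp σ₂ (((s : ℕ) + 1 : ℝ) / (A.len : ℝ)) (((t : ℕ) + 1 : ℝ) / (B.len : ℝ))

/-! ### Auxiliary lemmas -/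

/-- Feature map for the `exp`-of-product kernel. -/
noncomputable def featExp (n : ℕ) (t : ℝ) : ℝ := t ^ n / Real.sqrt n.factorial

lemma featExp_mul (n : ℕ) (a b : ℝ) :
    featExp n a * featExp n b = (a * b) ^ n / n.factorial := by
  unfold featExp
  rw [div_mul_div_comm, Real.mul_self_sqrt (by positivity), mul_pow]

/-- Feature map for the Gaussian kernel. -/
noncomputable def featG (σ : ℝ) (n : ℕ) (a : ℝ) : ℝ :=
  Real.exp (-(a ^ 2) / (2 * σ ^ 2)) * featExp n (a / σ)

lemma featG_mul (σ : ℝ) (n : ℕ) (a b : ℝ) :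
    featG σ n a * featG σ n b =
      (Real.exp (-(a ^ 2) / (2 * σ ^ 2)) * Real.exp (-(b ^ 2) / (2 * σ ^ 2))) *
        ((a * b / σ ^ 2) ^ n / n.factorial) := by
  unfold featG
  rw [mul_mul_mul_comm, featExp_mul]
  congr 2
  rw [div_mul_div_comm, ← pow_two]

lemma featG_summable (σ : ℝ) (a b : ℝ) :
    Summable fun n => featG σ n a * featG σ n b := by
  simp only [featG_mul]
  exact (Real.summable_pow_div_factorial _).mul_left _

lemma featG_tsum (σ : ℝ) (hσ : σ ≠ 0) (a b : ℝ) :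
    ∑' n, featG σ n a * featG σ n b = Gtemp σ a b := by
  simp only [featG_mul]
  rw [tsum_mul_left]
  have h : ∑' n : ℕ, (a * b / σ ^ 2) ^ n / (n.factorial : ℝ) = Real.exp (a * b / σ ^ 2) := by
    rw [Real.exp_eq_exp_ℝ, NormedSpace.exp_eq_tsum_div]
  rw [h, Gtemp, ← Real.exp_add, ← Real.exp_add]
  congr 1
  field_simp
  ring

lemma feat_quad_nonneg {X κ ι : Type*} [Fintype ι] (φ : κ → X → ℝ)
    (hs : ∀ x y, Summable fun n => φ n x * φ n y) (x : ι → X) (c : ι → ℝ) :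
    0 ≤ ∑ p, ∑ q, c p * c q * ∑' n, φ n (x p) * φ n (x q) := by
  have h1 : ∀ p q : ι, c p * c q * ∑' n, φ n (x p) * φ n (x q)
      = ∑' n, (c p * φ n (x p)) * (c q * φ n (x q)) := by
    intro p q
    rw [← tsum_mul_left]
    exact tsum_congr fun n => by ring
  have hs' : ∀ p q : ι, Summable fun n => (c p * φ n (x p)) * (c q * φ n (x q)) := by
    intro p q
    exact ((hs (x p) (x q)).mul_left (c p * c q)).congr fun n => by ring
  calc (0:ℝ) ≤ ∑' n, ∑ p, ∑ q, (c p * φ n (x p)) * (c q * φ n (x q)) := by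
        refine tsum_nonneg fun n => ?_
        rw [← Finset.sum_mul_sum]
        exact mul_self_nonneg _
    _ = ∑ p, ∑ q, c p * c q * ∑' n, φ n (x p) * φ n (x q) := by
        rw [Summable.tsum_finsetSum (fun p _ => summable_sum (fun q _ => hs' p q))]
        exact Finset.sum_congr rfl fun p _ => by
          rw [Summable.tsum_finsetSum (fun q _ => hs' p q)]
          exact Finset.sum_congr rfl fun q _ => (h1 p q).symm

lemma feat_mul_summable {X κ κ' : Type*} (φ : κ → X → ℝ) (ψ : κ' → X → ℝ)
    (hφ : ∀ x y, Summable fun n => φ n x * φ n y)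
    (hψ : ∀ x y, Summable fun n => ψ n x * ψ n y) (x y : X) :
    Summable fun n : κ × κ' => (φ n.1 x * ψ n.2 x) * (φ n.1 y * ψ n.2 y) := by
  have hf : Summable fun n : κ => ‖φ n x * φ n y‖ :=
    (hφ x y).abs.congr fun n => (Real.norm_eq_abs _).symm
  have hg : Summable fun n : κ' => ‖ψ n x * ψ n y‖ :=
    (hψ x y).abs.congr fun n => (Real.norm_eq_abs _).symm
  exact (Summable.of_norm (hf.mul_norm hg)).congr fun n => by ring

lemma feat_mul_tsum {X κ κ' : Type*} (φ : κ → X → ℝ) (ψ : κ' → X → ℝ)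
    (hφ : ∀ x y, Summable fun n => φ n x * φ n y)
    (hψ : ∀ x y, Summable fun n => ψ n x * ψ n y) (x y : X) :
    ∑' n : κ × κ', (φ n.1 x * ψ n.2 x) * (φ n.1 y * ψ n.2 y)
      = (∑' n, φ n x * φ n y) * (∑' n, ψ n x * ψ n y) := by
  have hf : Summable fun n : κ => ‖φ n x * φ n y‖ :=
    (hφ x y).abs.congr fun n => (Real.norm_eq_abs _).symm
  have hg : Summable fun n : κ' => ‖ψ n x * ψ n y‖ :=
    (hψ x y).abs.congr fun n => (Real.norm_eq_abs _).symm
  calc ∑' n : κ × κ', (φ n.1 x * ψ n.2 x) * (φ n.1 y * ψ n.2 y)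
      = ∑' n : κ × κ', (φ n.1 x * φ n.1 y) * (ψ n.2 x * ψ n.2 y) :=
        tsum_congr fun n => by ring
    _ = _ := (tsum_mul_tsum_of_summable_norm hf hg).symm

lemma sum_swap3 {α β γ M : Type*} [AddCommMonoid M] [Fintype α] [Fintype β] [Fintype γ]
    (F : α → β → γ → M) :
    ∑ a, ∑ b, ∑ c, F a b c = ∑ c, ∑ a, ∑ b, F a b c :=
  calc ∑ a, ∑ b, ∑ c, F a b c
      = ∑ a, ∑ c, ∑ b, F a b c := Finset.sum_congr rfl fun a _ => Finset.sum_comm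
    _ = ∑ c, ∑ a, ∑ b, F a b c := Finset.sum_comm

lemma sum_swap4 {α β γ δ M : Type*} [AddCommMonoid M] [Fintype α] [Fintype β] [Fintype γ]
    [Fintype δ] (F : α → β → γ → δ → M) :
    ∑ a, ∑ b, ∑ c, ∑ d, F a b c d = ∑ c, ∑ d, ∑ a, ∑ b, F a b c d :=
  calc ∑ a, ∑ b, ∑ c, ∑ d, F a b c d
      = ∑ a, ∑ c, ∑ b, ∑ d, F a b c d := Finset.sum_congr rfl fun a _ => Finset.sum_comm
    _ = ∑ c, ∑ a, ∑ b, ∑ d, F a b c d := Finset.sum_comm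
    _ = ∑ c, ∑ a, ∑ d, ∑ b, F a b c d :=
        Finset.sum_congr rfl fun c _ => Finset.sum_congr rfl fun a _ => Finset.sum_comm
    _ = ∑ c, ∑ d, ∑ a, ∑ b, F a b c d := Finset.sum_congr rfl fun c _ => Finset.sum_comm

/-- The quadratic form of `Kjoint² ⬝ Gtemp` is nonnegative. -/
lemma KG_quad_nonneg (σ₁ σ₂ : ℝ) (h1 : σ₁ ≠ 0) (h2 : σ₂ ≠ 0) {ι : Type*} [Fintype ι]
    (x : ι → (Fin 3 → ℝ)) (u : ι → ℝ) (c : ι → ℝ) :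
    0 ≤ ∑ p, ∑ q, c p * c q * ((Kjoint σ₁ (x p) (x q)) ^ 2 * Gtemp σ₂ (u p) (u q)) := by
  have expand : ∀ p q : ι,
      c p * c q * ((Kjoint σ₁ (x p) (x q)) ^ 2 * Gtemp σ₂ (u p) (u q))
        = ∑ i₁ : Fin 3, ∑ i₂ : Fin 3, c p * c q *
            ((Gtemp σ₁ (x p i₁) (x q i₁) * Gtemp σ₁ (x p i₂) (x q i₂)) *
              Gtemp σ₂ (u p) (u q)) := by
    intro p q
    have : (Kjoint σ₁ (x p) (x q)) ^ 2
        = ∑ i₁ : Fin 3, ∑ i₂ : Fin 3,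
            Gtemp σ₁ (x p i₁) (x q i₁) * Gtemp σ₁ (x p i₂) (x q i₂) := by
      rw [sq, Kjoint, Finset.sum_mul_sum]
      rfl
    simp only [this, Finset.sum_mul, Finset.mul_sum]
  calc (0:ℝ) ≤ ∑ i₁ : Fin 3, ∑ i₂ : Fin 3, ∑ p, ∑ q, c p * c q *
            ((Gtemp σ₁ (x p i₁) (x q i₁) * Gtemp σ₁ (x p i₂) (x q i₂)) *
              Gtemp σ₂ (u p) (u q)) := by
          refine Finset.sum_nonneg fun i₁ _ => Finset.sum_nonneg fun i₂ _ => ?_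
          -- feature map for the product kernel
          set φ₁ : ℕ → ι → ℝ := fun n p => featG σ₁ n (x p i₁) with hφ₁
          set φ₂ : ℕ → ι → ℝ := fun n p => featG σ₁ n (x p i₂) with hφ₂
          set φ₃ : ℕ → ι → ℝ := fun n p => featG σ₂ n (u p) with hφ₃
          have s₁ : ∀ p q : ι, Summable fun n => φ₁ n p * φ₁ n q :=
            fun p q => featG_summable σ₁ _ _
          have s₂ : ∀ p q : ι, Summable fun n => φ₂ n p * φ₂ n q :=
            fun p q => featG_summable σ₁ _ _
          have s₃ : ∀ p q : ι, Summable fun n => φ₃ n p * φ₃ n q :=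
            fun p q => featG_summable σ₂ _ _
          set φ₁₂ : ℕ × ℕ → ι → ℝ := fun n p => φ₁ n.1 p * φ₂ n.2 p with hφ₁₂
          have s₁₂ : ∀ p q : ι, Summable fun n => φ₁₂ n p * φ₁₂ n q :=
            fun p q => feat_mul_summable φ₁ φ₂ s₁ s₂ p q
          set Φ : (ℕ × ℕ) × ℕ → ι → ℝ := fun n p => φ₁₂ n.1 p * φ₃ n.2 p with hΦ
          have sΦ : ∀ p q : ι, Summable fun n => Φ n p * Φ n q :=
            fun p q => feat_mul_summable φ₁₂ φ₃ s₁₂ s₃ p q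
          have tΦ : ∀ p q : ι, ∑' n, Φ n p * Φ n q
              = (Gtemp σ₁ (x p i₁) (x q i₁) * Gtemp σ₁ (x p i₂) (x q i₂)) *
                  Gtemp σ₂ (u p) (u q) := by
            intro p q
            have h12 : ∑' n, φ₁₂ n p * φ₁₂ n q
                = Gtemp σ₁ (x p i₁) (x q i₁) * Gtemp σ₁ (x p i₂) (x q i₂) := by
              rw [feat_mul_tsum φ₁ φ₂ s₁ s₂ p q, featG_tsum σ₁ h1, featG_tsum σ₁ h1]
            rw [feat_mul_tsum φ₁₂ φ₃ s₁₂ s₃ p q, h12, featG_tsum σ₂ h2]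
          have := feat_quad_nonneg Φ sΦ id c
          simp only [id_eq] at this
          calc (0:ℝ) ≤ ∑ p, ∑ q, c p * c q * ∑' n, Φ n p * Φ n q := this
            _ = _ := by
              refine Finset.sum_congr rfl fun p _ => Finset.sum_congr rfl fun q _ => ?_
              rw [tΦ p q]
        _ = ∑ p, ∑ q, c p * c q *
              ((Kjoint σ₁ (x p) (x q)) ^ 2 * Gtemp σ₂ (u p) (u q)) := by
          refine Eq.trans (sum_swap4 fun i₁ i₂ p q => c p * c q *
            ((Gtemp σ₁ (x p i₁) (x q i₁) * Gtemp σ₁ (x p i₂) (x q i₂)) *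
              Gtemp σ₂ (u p) (u q))) ?_
          exact Finset.sum_congr rfl fun p _ => Finset.sum_congr rfl fun q _ =>
            (expand p q).symm

theorem seqKernel_isPSDKernel (J : ℕ) (σ₁ σ₂ : ℝ) (hσ₁ : 0 < σ₁) (hσ₂ : 0 < σ₂) :
    IsPSDKernel (seqKernel J σ₁ σ₂) := by
  constructor
  · -- symmetry
    intro A B
    unfold seqKernel
    rw [mul_comm (A.len : ℝ) (B.len : ℝ)]
    congr 1
    refine Finset.sum_congr rfl fun i _ => ?_
    rw [Finset.sum_comm]
    refine Finset.sum_congr rfl fun t _ => Finset.sum_congr rfl fun s _ => ?_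
    congr 1
    · congr 1
      exact Finset.sum_congr rfl fun j _ => congrArg Real.exp (by ring)
    · exact congrArg Real.exp (by ring)
  · -- positivity
    intro m A c
    have key : ∀ p q : Fin m, c p * c q * seqKernel J σ₁ σ₂ (A p) (A q)
        = ∑ i : Fin J, ∑ s : Fin (A p).len, ∑ t : Fin (A q).len,
            (c p / ((A p).len : ℝ)) * (c q / ((A q).len : ℝ)) *
              ((Kjoint σ₁ ((A p).joints i s) ((A q).joints i t)) ^ 2 *
                Gtemp σ₂ (((s : ℕ) + 1 : ℝ) / ((A p).len : ℝ))
                  (((t : ℕ) + 1 : ℝ) / ((A q).len : ℝ))) := by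
      intro p q
      unfold seqKernel
      simp only [Finset.mul_sum]
      refine Finset.sum_congr rfl fun i _ => Finset.sum_congr rfl fun s _ =>
        Finset.sum_congr rfl fun t _ => ?_
      ring
    have csum : ∑ p, ∑ q, c p * c q * seqKernel J σ₁ σ₂ (A p) (A q)
        = ∑ i : Fin J,
            ∑ σ : (Σ p : Fin m, Fin (A p).len), ∑ τ : (Σ p : Fin m, Fin (A p).len),
              (c σ.1 / ((A σ.1).len : ℝ)) * (c τ.1 / ((A τ.1).len : ℝ)) *
                ((Kjoint σ₁ ((A σ.1).joints i σ.2) ((A τ.1).joints i τ.2)) ^ 2 *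
                  Gtemp σ₂ (((σ.2 : ℕ) + 1 : ℝ) / ((A σ.1).len : ℝ))
                    (((τ.2 : ℕ) + 1 : ℝ) / ((A τ.1).len : ℝ))) := by
      calc ∑ p, ∑ q, c p * c q * seqKernel J σ₁ σ₂ (A p) (A q)
          = ∑ p, ∑ q, ∑ i : Fin J, ∑ s : Fin (A p).len, ∑ t : Fin (A q).len,
              (c p / ((A p).len : ℝ)) * (c q / ((A q).len : ℝ)) *
                ((Kjoint σ₁ ((A p).joints i s) ((A q).joints i t)) ^ 2 *
                  Gtemp σ₂ (((s : ℕ) + 1 : ℝ) / ((A p).len : ℝ))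
                    (((t : ℕ) + 1 : ℝ) / ((A q).len : ℝ))) :=
            by
              refine Finset.sum_congr rfl fun p _ => Finset.sum_congr rfl fun q _ => ?_
              exact key p q
        _ = ∑ i : Fin J, ∑ p, ∑ q, ∑ s : Fin (A p).len, ∑ t : Fin (A q).len,
              (c p / ((A p).len : ℝ)) * (c q / ((A q).len : ℝ)) *
                ((Kjoint σ₁ ((A p).joints i s) ((A q).joints i t)) ^ 2 *
                  Gtemp σ₂ (((s : ℕ) + 1 : ℝ) / ((A p).len : ℝ))
                    (((t : ℕ) + 1 : ℝ) / ((A q).len : ℝ))) := by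
            exact sum_swap3 fun p q i =>
              ∑ s : Fin (A p).len, ∑ t : Fin (A q).len,
                (c p / ((A p).len : ℝ)) * (c q / ((A q).len : ℝ)) *
                  ((Kjoint σ₁ ((A p).joints i s) ((A q).joints i t)) ^ 2 *
                    Gtemp σ₂ (((s : ℕ) + 1 : ℝ) / ((A p).len : ℝ))
                      (((t : ℕ) + 1 : ℝ) / ((A q).len : ℝ)))
        _ = ∑ i : Fin J, ∑ p, ∑ s : Fin (A p).len, ∑ q, ∑ t : Fin (A q).len,
              (c p / ((A p).len : ℝ)) * (c q / ((A q).len : ℝ)) *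
                ((Kjoint σ₁ ((A p).joints i s) ((A q).joints i t)) ^ 2 *
                  Gtemp σ₂ (((s : ℕ) + 1 : ℝ) / ((A p).len : ℝ))
                    (((t : ℕ) + 1 : ℝ) / ((A q).len : ℝ))) := by
            refine Finset.sum_congr rfl fun i _ => Finset.sum_congr rfl fun p _ => ?_
            rw [Finset.sum_comm]
        _ = _ := by
            have hσ : ∀ (f : (Σ p : Fin m, Fin (A p).len) → ℝ),
                ∑ σ : (Σ p : Fin m, Fin (A p).len), f σ
                  = ∑ p, ∑ s : Fin (A p).len, f ⟨p, s⟩ := by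
              intro f
              rw [← Finset.univ_sigma_univ, Finset.sum_sigma]
            refine Finset.sum_congr rfl fun i _ => ?_
            rw [hσ]
            refine Finset.sum_congr rfl fun p _ => Finset.sum_congr rfl fun s _ => ?_
            rw [hσ]
    rw [csum]
    refine Finset.sum_nonneg fun i _ => ?_
    exact KG_quad_nonneg σ₁ σ₂ (ne_of_gt hσ₁) (ne_of_gt hσ₂)
      (fun σ : (Σ p : Fin m, Fin (A p).len) => (A σ.1).joints i σ.2)
      (fun σ : (Σ p : Fin m, Fin (A p).len) => ((σ.2 : ℕ) + 1 : ℝ) / ((A σ.1).len : ℝ))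
      (fun σ : (Σ p : Fin m, Fin (A p).len) => c σ.1 / ((A σ.1).len : ℝ))
end
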